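/- arXiv:2209.00680 — 2 statements merged into one kernel-verified Lean document; each statement's English description precedes it below -/
import Mathlib

section
/- Let m ≥ 1, let F' and F be free groups on m generators, λ' ∈ F', λ ∈ F, ε : F' → F a group isomorphism, and τ : ℂ[F'] → ℂ[F] the induced ℂ-algebra isomorphism of group algebras. Let p : ℂ[F'] → ℂ[F']/(λ'−1) and q : ℂ[F] → ℂ[F]/(λ−1) be the quotient maps by the two-sided ideals generated by λ'−1 and λ−1. If there exists a ℂ-algebra isomorphism τ̃ : ℂ[F']/(λ'−1) → ℂ[F]/(λ−1) with τ̃ ∘ p = q ∘ τ, then the normal closure of {ε(λ')} in F equals the normal closure of {λ} in F. -/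
open MonoidAlgebra

/-- The relation on the group algebra `ℂ[F]` identifying `w - 1` with `0`;
quotienting by it (via `RingQuot`) gives the quotient of `ℂ[F]` by the
two-sided ideal generated by `w - 1`. -/
def relOf (m : ℕ) (w : FreeGroup (Fin m)) :
    MonoidAlgebra ℂ (FreeGroup (Fin m)) → MonoidAlgebra ℂ (FreeGroup (Fin m)) → Prop :=
  fun x y => x = MonoidAlgebra.of ℂ (FreeGroup (Fin m)) w - 1 ∧ y = 0

/-!
The image of a group element `g` in `k[G]/(w - 1)` is `1` exactly when `g` lies in the normal
closure of `w`: the elements with trivial image form a normal subgroup containing `w`, and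
conversely `k[G]/(w - 1)` maps to `k[G/⟨⟨w⟩⟩]`, in which distinct group elements stay distinct.
Since `τ̃` is injective and intertwines the two quotient maps through `ε`, it identifies the normal
closure of `λ'` with the preimage under `ε` of the normal closure of `λ`.
-/

theorem MonoidHom.ker_comp_of_injective' {G M N : Type*} [Group G] [MulOneClass M]
    [MulOneClass N] (f : G →* M) {g : M →* N} (hg : Function.Injective g) :
    (g.comp f).ker = f.ker := by
  ext x
  simp only [MonoidHom.mem_ker, MonoidHom.comp_apply, ← hg.eq_iff, map_one]

section SubOneQuotient

variable (k : Type*) {G : Type*} [CommRing k] [Group G]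

-- `relOf m w` is `subOneRel ℂ w` by definition, which is how the lemmas below apply to it.
def subOneRel (w : G) : MonoidAlgebra k G → MonoidAlgebra k G → Prop :=
  fun x y => x = of k G w - 1 ∧ y = 0

noncomputable def ofQuotSubOne (w : G) : G →* RingQuot (subOneRel k w) :=
  (RingQuot.mkAlgHom k (subOneRel k w) : MonoidAlgebra k G →* RingQuot (subOneRel k w)).comp
    (of k G)

theorem ofQuotSubOne_self (w : G) : ofQuotSubOne k w w = 1 := by
  have h := RingQuot.mkAlgHom_rel k (show subOneRel k w (of k G w - 1) 0 from ⟨rfl, rfl⟩)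
  rwa [map_sub, map_one, map_zero, sub_eq_zero] at h

theorem ker_ofQuotSubOne [Nontrivial k] (w : G) :
    (ofQuotSubOne k w).ker = Subgroup.normalClosure {w} := by
  set N := Subgroup.normalClosure ({w} : Set G)
  set φ := ofQuotSubOne k w
  apply le_antisymm
  · let π : RingQuot (subOneRel k w) →ₐ[k] MonoidAlgebra k (G ⧸ N) :=
      RingQuot.liftAlgHom k ⟨mapDomainAlgHom k k (QuotientGroup.mk' N), by
        rintro _ _ ⟨rfl, rfl⟩
        have hw : QuotientGroup.mk' N w = 1 :=
          (QuotientGroup.eq_one_iff w).2 (Subgroup.subset_normalClosure rfl)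
        change mapDomainAlgHom k k (QuotientGroup.mk' N) (of k G w - 1) = 0
        rw [map_sub, map_one, mapDomainAlgHom_apply, of_apply, mapDomain_single, hw, ← one_def,
          sub_self]⟩
    have hπ : π.toMonoidHom.comp φ = (of k (G ⧸ N)).comp (QuotientGroup.mk' N) := by
      ext g
      simp [π, φ, ofQuotSubOne, mapDomain_single]
    have hle : φ.ker ≤ (π.toMonoidHom.comp φ).ker :=
      fun g hg => by rw [MonoidHom.mem_ker, MonoidHom.comp_apply, hg, map_one]
    rwa [hπ, MonoidHom.ker_comp_of_injective' _ of_injective, QuotientGroup.ker_mk'] at hle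
  · have : φ.ker.Normal := φ.ker_toHomUnits ▸ φ.toHomUnits.normal_ker
    exact Subgroup.normalClosure_le_normal (by simpa [φ] using ofQuotSubOne_self k w)

end SubOneQuotient

theorem normalClosure_eq_of_descends_to_quotient_iso_general (m : ℕ)
    (lam' lam : FreeGroup (Fin m))
    (ε : FreeGroup (Fin m) ≃* FreeGroup (Fin m))
    (τtilde : RingQuot (relOf m lam') ≃ₐ[ℂ] RingQuot (relOf m lam))
    (hcomm : ∀ x : MonoidAlgebra ℂ (FreeGroup (Fin m)),
      τtilde (RingQuot.mkAlgHom ℂ (relOf m lam') x) =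
        RingQuot.mkAlgHom ℂ (relOf m lam) (MonoidAlgebra.domCongr ℂ ℂ ε x)) :
    Subgroup.normalClosure ({ε lam'} : Set (FreeGroup (Fin m))) =
      Subgroup.normalClosure ({lam} : Set (FreeGroup (Fin m))) := by
  have hφ : τtilde.toRingEquiv.toMonoidHom.comp (ofQuotSubOne ℂ lam') =
      (ofQuotSubOne ℂ lam).comp (ε : FreeGroup (Fin m) →* FreeGroup (Fin m)) := by
    refine MonoidHom.ext fun g => ?_
    change τtilde (RingQuot.mkAlgHom ℂ (relOf m lam') (of ℂ _ g)) =
      RingQuot.mkAlgHom ℂ (relOf m lam) (of ℂ _ (ε g))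
    rw [hcomm, of_apply, of_apply, domCongr_single]
  have hpre : Subgroup.normalClosure {lam'} = (Subgroup.normalClosure {lam}).comap ε := by
    rw [← ker_ofQuotSubOne ℂ lam', ← ker_ofQuotSubOne ℂ lam, MonoidHom.comap_ker, ← hφ]
    exact (MonoidHom.ker_comp_of_injective' _ τtilde.injective).symm
  calc Subgroup.normalClosure {ε lam'}
      = (Subgroup.normalClosure {lam'}).map (ε : FreeGroup (Fin m) →* FreeGroup (Fin m)) := by
        rw [Subgroup.map_normalClosure _ _ ε.surjective, Set.image_singleton]; rfl
    _ = Subgroup.normalClosure {lam} := by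
        rw [hpre, Subgroup.map_comap_eq_self_of_surjective ε.surjective]

/-- If the isomorphism of group algebras `τ : ℂ[F'] ≃ ℂ[F]` induced by an isomorphism of
free groups `ε : F' ≃ F` descends to an isomorphism `τ̃ : ℂ[F']/(λ'-1) ≃ ℂ[F]/(λ-1)` with
`τ̃ ∘ p = q ∘ τ`, then the normal closure of `{ε(λ')}` in `F` equals the normal closure of
`{λ}` in `F`. -/
theorem normalClosure_eq_of_descends_to_quotient_iso (m : ℕ) (hm : 1 ≤ m)
    (lam' lam : FreeGroup (Fin m))
    (ε : FreeGroup (Fin m) ≃* FreeGroup (Fin m))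
    (τtilde : RingQuot (relOf m lam') ≃ₐ[ℂ] RingQuot (relOf m lam))
    (hcomm : ∀ x : MonoidAlgebra ℂ (FreeGroup (Fin m)),
      τtilde (RingQuot.mkAlgHom ℂ (relOf m lam') x) =
        RingQuot.mkAlgHom ℂ (relOf m lam) (MonoidAlgebra.domCongr ℂ ℂ ε x)) :
    Subgroup.normalClosure ({ε lam'} : Set (FreeGroup (Fin m))) =
      Subgroup.normalClosure ({lam} : Set (FreeGroup (Fin m))) :=
  normalClosure_eq_of_descends_to_quotient_iso_general m lam' lam ε τtilde hcomm
end

section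
/- Let F₆ be the free group on six generators d, f, g, i, j, l and F₄ the free group on four generators d, g, i, l. Then the quotient of the group algebra ℂ[F₆] by the two-sided ideal generated by the three elements jg − gd, lf − j, and id − lif is isomorphic as a ℂ-algebra to the quotient of ℂ[F₄] by the two-sided ideal generated by the single element l·i⁻¹·l⁻¹·i·d·g·d⁻¹·g⁻¹ − 1 (which is the group algebra ℂ[π₁(Σ₂)] of the genus 2 surface group). -/
/-!
A Tietze transformation: the relations `jg = gd` and `lf = j` express `j = gdg⁻¹` and
`f = l⁻¹gdg⁻¹` through the other generators, and after this substitution `id = lif` becomes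
`l i⁻¹ l⁻¹ i d g d⁻¹ g⁻¹ = 1`. Group elements are units in any quotient of a group algebra, so
`d, g, i, l ↦ d, g, i, l` and `d, f, g, i, j, l ↦ d, l⁻¹gdg⁻¹, g, i, gdg⁻¹, l` extend to algebra
maps between the two quotients, and these are mutually inverse since they are so on generators.
-/

namespace Genus2Example

/-- The free group on the six generators `d, f, g, i, j, l`. -/
abbrev F6 := FreeGroup (Fin 6)
/-- The free group on the four generators `d, g, i, l`. -/
abbrev F4 := FreeGroup (Fin 4)

def d : F6 := FreeGroup.of 0
def f : F6 := FreeGroup.of 1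
def g : F6 := FreeGroup.of 2
def i : F6 := FreeGroup.of 3
def j : F6 := FreeGroup.of 4
def l : F6 := FreeGroup.of 5

def d' : F4 := FreeGroup.of 0
def g' : F4 := FreeGroup.of 1
def i' : F4 := FreeGroup.of 2
def l' : F4 := FreeGroup.of 3

/-- The relation on `ℂ[F₆]` identifying the three elements `jg - gd`, `lf - j`, `id - lif`
with `0`; quotienting by it (via `RingQuot`) gives the quotient of `ℂ[F₆]` by the two-sided
ideal generated by these three elements. -/
def rel6 : MonoidAlgebra ℂ F6 → MonoidAlgebra ℂ F6 → Prop := fun x y =>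
  (x = MonoidAlgebra.of ℂ F6 (j * g) - MonoidAlgebra.of ℂ F6 (g * d) ∧ y = 0) ∨
  (x = MonoidAlgebra.of ℂ F6 (l * f) - MonoidAlgebra.of ℂ F6 j ∧ y = 0) ∨
  (x = MonoidAlgebra.of ℂ F6 (i * d) - MonoidAlgebra.of ℂ F6 (l * i * f) ∧ y = 0)

/-- The relation on `ℂ[F₄]` identifying `l·i⁻¹·l⁻¹·i·d·g·d⁻¹·g⁻¹ - 1` with `0`; quotienting
by it (via `RingQuot`) gives the group algebra `ℂ[π₁(Σ₂)]` of the genus 2 surface group. -/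
def rel4 : MonoidAlgebra ℂ F4 → MonoidAlgebra ℂ F4 → Prop := fun x y =>
  x = MonoidAlgebra.of ℂ F4 (l' * i'⁻¹ * l'⁻¹ * i' * d' * g' * d'⁻¹ * g'⁻¹) - 1 ∧ y = 0

open MonoidAlgebra

section GroupAlgebraQuotient

variable {k G ι A : Type*} [CommRing k] [Group G] [Semiring A] [Algebra k A]

noncomputable def quotUnit (r : MonoidAlgebra k G → MonoidAlgebra k G → Prop) :
    G →* (RingQuot r)ˣ :=
  (((RingQuot.mkAlgHom k r : MonoidAlgebra k G →ₐ[k] RingQuot r) :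
    MonoidAlgebra k G →* RingQuot r).comp (of k G)).toHomUnits

theorem quotUnit_eq_of_rel {r : MonoidAlgebra k G → MonoidAlgebra k G → Prop} {x y : G}
    (h : r (of k G x - of k G y) 0) : quotUnit r x = quotUnit r y := by
  have := RingQuot.mkAlgHom_rel k h
  rw [map_sub, map_zero, sub_eq_zero] at this
  exact Units.ext this

theorem quotUnit_eq_one_of_rel {r : MonoidAlgebra k G → MonoidAlgebra k G → Prop} {x : G}
    (h : r (of k G x - 1) 0) : quotUnit r x = 1 :=
  (quotUnit_eq_of_rel (y := 1) (by rwa [map_one])).trans (map_one _)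

theorem algHom_ext_of_freeGroup
    {r : MonoidAlgebra k (FreeGroup ι) → MonoidAlgebra k (FreeGroup ι) → Prop}
    {f₁ f₂ : RingQuot r →ₐ[k] A}
    (h : ∀ n, f₁ (quotUnit r (FreeGroup.of n)) = f₂ (quotUnit r (FreeGroup.of n))) :
    f₁ = f₂ :=
  RingQuot.ringQuot_ext' k _ _ <| (MonoidAlgebra.lift k A _).symm.injective <|
    FreeGroup.ext_hom _ _ h

variable (k) in
noncomputable def freeGroupAlgebraLift (w : ι → Aˣ) : MonoidAlgebra k (FreeGroup ι) →ₐ[k] A :=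
  MonoidAlgebra.lift k A _ ((Units.coeHom A).comp (FreeGroup.lift w))

theorem freeGroupAlgebraLift_of (w : ι → Aˣ) (x : FreeGroup ι) :
    freeGroupAlgebraLift k w (of k _ x) = (FreeGroup.lift w x : A) :=
  MonoidAlgebra.lift_of _ x

variable {r : MonoidAlgebra k (FreeGroup ι) → MonoidAlgebra k (FreeGroup ι) → Prop}

variable (r) in
noncomputable def quotLift (w : ι → Aˣ)
    (hw : ∀ ⦃x y⦄, r x y → freeGroupAlgebraLift k w x = freeGroupAlgebraLift k w y) :
    RingQuot r →ₐ[k] A :=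
  RingQuot.liftAlgHom k ⟨freeGroupAlgebraLift k w, hw⟩

theorem quotLift_quotUnit (w : ι → Aˣ)
    (hw : ∀ ⦃x y⦄, r x y → freeGroupAlgebraLift k w x = freeGroupAlgebraLift k w y)
    (x : FreeGroup ι) : quotLift r w hw (quotUnit r x) = (FreeGroup.lift w x : A) :=
  (RingQuot.liftAlgHom_mkAlgHom_apply k _ hw _).trans (freeGroupAlgebraLift_of w x)

end GroupAlgebraQuotient

theorem jacobi_relations_iff {G : Type*} [Group G] {d f g i j l : G} :
    (j * g = g * d ∧ l * f = j ∧ i * d = l * i * f) ↔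
      (j = g * d * g⁻¹ ∧ f = l⁻¹ * j ∧ l * i⁻¹ * l⁻¹ * i * d * g * d⁻¹ * g⁻¹ = 1) := by
  constructor
  · rintro ⟨h₁, h₂, h₃⟩
    obtain rfl : j = g * d * g⁻¹ := by rw [← h₁]; group
    obtain rfl : f = l⁻¹ * (g * d * g⁻¹) := by rw [← h₂]; group
    refine ⟨rfl, rfl, ?_⟩
    calc l * i⁻¹ * l⁻¹ * i * d * g * d⁻¹ * g⁻¹
        = l * i⁻¹ * l⁻¹ * (i * d) * (g * d⁻¹ * g⁻¹) := by group
      _ = 1 := by rw [h₃]; group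
  · rintro ⟨rfl, rfl, h⟩
    refine ⟨by group, by group, ?_⟩
    calc i * d = l * i * l⁻¹ * (l * i⁻¹ * l⁻¹ * i * d * g * d⁻¹ * g⁻¹) * (g * d * g⁻¹) := by
          group
      _ = l * i * (l⁻¹ * (g * d * g⁻¹)) := by rw [h]; group

theorem jacobi_relations_quotUnit :
    quotUnit rel6 j * quotUnit rel6 g = quotUnit rel6 g * quotUnit rel6 d ∧
      quotUnit rel6 l * quotUnit rel6 f = quotUnit rel6 j ∧
      quotUnit rel6 i * quotUnit rel6 d = quotUnit rel6 l * quotUnit rel6 i * quotUnit rel6 f := by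
  simp only [← map_mul]
  exact ⟨quotUnit_eq_of_rel (Or.inl ⟨rfl, rfl⟩), quotUnit_eq_of_rel (Or.inr (Or.inl ⟨rfl, rfl⟩)),
    quotUnit_eq_of_rel (Or.inr (Or.inr ⟨rfl, rfl⟩))⟩

theorem surface_relation_quotUnit :
    quotUnit rel4 l' * (quotUnit rel4 i')⁻¹ * (quotUnit rel4 l')⁻¹ * quotUnit rel4 i' *
      quotUnit rel4 d' * quotUnit rel4 g' * (quotUnit rel4 d')⁻¹ * (quotUnit rel4 g')⁻¹ = 1 := by
  simp only [← map_inv, ← map_mul]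
  exact quotUnit_eq_one_of_rel ⟨rfl, rfl⟩

noncomputable def toSurfaceGen : Fin 6 → (RingQuot rel4)ˣ
  | 0 => quotUnit rel4 d'
  | 1 => quotUnit rel4 (l'⁻¹ * (g' * d' * g'⁻¹))
  | 2 => quotUnit rel4 g'
  | 3 => quotUnit rel4 i'
  | 4 => quotUnit rel4 (g' * d' * g'⁻¹)
  | 5 => quotUnit rel4 l'

noncomputable def ofSurfaceGen : Fin 4 → (RingQuot rel6)ˣ
  | 0 => quotUnit rel6 d
  | 1 => quotUnit rel6 g
  | 2 => quotUnit rel6 i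
  | 3 => quotUnit rel6 l

theorem toSurface_respects_rel6 ⦃x y : MonoidAlgebra ℂ F6⦄ (h : rel6 x y) :
    freeGroupAlgebraLift ℂ toSurfaceGen x = freeGroupAlgebraLift ℂ toSurfaceGen y := by
  obtain ⟨h₁, h₂, h₃⟩ := jacobi_relations_iff.mpr ⟨rfl, rfl, surface_relation_quotUnit⟩
  rcases h with ⟨rfl, rfl⟩ | ⟨rfl, rfl⟩ | ⟨rfl, rfl⟩ <;>
    rw [map_zero, map_sub, sub_eq_zero, freeGroupAlgebraLift_of, freeGroupAlgebraLift_of] <;>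
    refine congrArg Units.val ?_ <;>
    simp only [map_mul, map_inv, d, f, g, i, j, l, FreeGroup.lift_apply_of, toSurfaceGen]
  exacts [h₁, h₂, h₃]

theorem ofSurface_respects_rel4 ⦃x y : MonoidAlgebra ℂ F4⦄ (h : rel4 x y) :
    freeGroupAlgebraLift ℂ ofSurfaceGen x = freeGroupAlgebraLift ℂ ofSurfaceGen y := by
  obtain ⟨rfl, rfl⟩ := h
  rw [map_zero, map_sub, sub_eq_zero, freeGroupAlgebraLift_of, map_one]
  refine (congrArg Units.val ?_).trans Units.val_one
  simp only [map_mul, map_inv, d', g', i', l', FreeGroup.lift_apply_of, ofSurfaceGen]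
  exact (jacobi_relations_iff.mp jacobi_relations_quotUnit).2.2

noncomputable def toSurface : RingQuot rel6 →ₐ[ℂ] RingQuot rel4 :=
  quotLift rel6 toSurfaceGen toSurface_respects_rel6

noncomputable def ofSurface : RingQuot rel4 →ₐ[ℂ] RingQuot rel6 :=
  quotLift rel4 ofSurfaceGen ofSurface_respects_rel4

theorem toSurface_comp_ofSurface : toSurface.comp ofSurface = AlgHom.id ℂ (RingQuot rel4) := by
  refine algHom_ext_of_freeGroup fun n => ?_
  fin_cases n <;>
    simp only [AlgHom.comp_apply, AlgHom.id_apply, toSurface, ofSurface, quotLift_quotUnit,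
      FreeGroup.lift_apply_of, toSurfaceGen, ofSurfaceGen, d, g, i, l, d', g', i', l',
      Fin.reduceFinMk]

theorem ofSurface_comp_toSurface : ofSurface.comp toSurface = AlgHom.id ℂ (RingQuot rel6) := by
  obtain ⟨hj, hf, -⟩ := jacobi_relations_iff.mp jacobi_relations_quotUnit
  simp only [d, f, g, j, l] at hj hf
  refine algHom_ext_of_freeGroup fun n => ?_
  fin_cases n <;>
    simp only [AlgHom.comp_apply, AlgHom.id_apply, toSurface, ofSurface, quotLift_quotUnit,
      FreeGroup.lift_apply_of, toSurfaceGen, d', g', i', l', Fin.reduceFinMk] <;>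
    simp only [map_mul, map_inv, FreeGroup.lift_apply_of, ofSurfaceGen, d, g, i, l, hj, hf]

/-- **Example 2.4.** The quotient of `ℂ[F₆]` by the two-sided ideal generated by
`jg - gd`, `lf - j` and `id - lif` is isomorphic as a `ℂ`-algebra to the quotient of
`ℂ[F₄]` by the two-sided ideal generated by `l·i⁻¹·l⁻¹·i·d·g·d⁻¹·g⁻¹ - 1`, i.e. to the
group algebra of the genus 2 surface group. -/
theorem jacobiAlgebra_iso_surfaceGroupAlgebra :
    Nonempty (RingQuot rel6 ≃ₐ[ℂ] RingQuot rel4) :=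
  ⟨AlgEquiv.ofAlgHom toSurface ofSurface toSurface_comp_ofSurface ofSurface_comp_toSurface⟩

end Genus2Example
end
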